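/- Let u ∈ M(N) be a rational symbol with denominator B(z) = ∏_{j=1}^N (1 − p_j z), |p_j| < 1, and let b(z) = ∏_{j=1}^N (z − conj(p_j))/(1 − p_j z) be the associated finite Blaschke product. Then ker H_u = b·L²_+. -/

import Mathlib

/-!
On the circle write `u = A / B` and `b = D / B` with `D(z) = ∏ (z - conj p_j) = z ^ N · conj (B z)`,
and put `K = h / D`. Then `h ∈ L²₊` says that `D K` has no negative Fourier modes, `H_u h = 0`
says the same of `Ã K`, where `conj u = z Ã / D` with `Ã(z) = z ^ (N - 1) · conj (A z)` a
polynomial, and `h = b g` forces `g = conj b · h = B K`. The polynomials `P` for which `P K` has no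
negative modes form an ideal, and both `Ã` and `B` are coprime to `D`; so this ideal contains `Ã`
iff it contains `B`.
-/

noncomputable section

open MeasureTheory Real AddCircle Polynomial
open scoped ComplexConjugate

instance : Fact (0 < 2 * π) := ⟨by positivity⟩

/-- The point of the unit circle in `ℂ` corresponding to `x ∈ ℝ/2πℤ`. -/
def circlePt (x : AddCircle (2 * π)) : ℂ := (AddCircle.toCircle x : ℂ)

/-- The finite Blaschke product `b(z) = ∏_j (z − conj(p_j))/(1 − p_j z)` on the circle. -/
def blaschke {N : ℕ} (p : Fin N → ℂ) (x : AddCircle (2 * π)) : ℂ :=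
  ∏ j, (circlePt x - conj (p j)) / (1 - p j * circlePt x)

theorem continuous_circlePt : Continuous circlePt :=
  continuous_subtype_val.comp continuous_toCircle

theorem norm_circlePt (x : AddCircle (2 * π)) : ‖circlePt x‖ = 1 := Circle.norm_coe _

theorem circlePt_ne_zero (x : AddCircle (2 * π)) : circlePt x ≠ 0 := Circle.coe_ne_zero _

theorem fourier_natCast_apply (k : ℕ) (x : AddCircle (2 * π)) :
    fourier (k : ℤ) x = circlePt x ^ k := by
  rw [fourier_apply, natCast_zsmul, toCircle_nsmul, Circle.coe_pow]; rfl

theorem fourierCoeff_circlePt_pow_mul (f : AddCircle (2 * π) → ℂ) (k : ℕ) (n : ℤ) :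
    fourierCoeff (fun x => circlePt x ^ k * f x) n = fourierCoeff f (n - k) := by
  simp only [fourierCoeff, smul_eq_mul, ← fourier_natCast_apply]
  congr 1; funext x
  rw [neg_sub, sub_eq_neg_add, fourier_add]; ring

theorem fourierCoeff_conj (f : AddCircle (2 * π) → ℂ) (n : ℤ) :
    fourierCoeff (fun x => conj (f x)) n = conj (fourierCoeff f (-n)) := by
  simp only [fourierCoeff, smul_eq_mul, ← integral_conj, map_mul, neg_neg, fourier_neg]

theorem MeasureTheory.Integrable.continuous_mul {X : Type*} [TopologicalSpace X] [CompactSpace X]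
    [MeasurableSpace X] [OpensMeasurableSpace X] {μ : Measure X} {f φ : X → ℂ}
    (hf : Integrable f μ) (hφ : Continuous φ) : Integrable (fun x => φ x * f x) μ :=
  hf.bdd_mul (c := ‖(⟨φ, hφ⟩ : C(X, ℂ))‖) hφ.aestronglyMeasurable
    (Filter.Eventually.of_forall fun x => ContinuousMap.norm_coe_le_norm ⟨φ, hφ⟩ x)

def HasNonnegSpectrum (f : AddCircle (2 * π) → ℂ) : Prop :=
  ∀ n : ℤ, n < 0 → fourierCoeff f n = 0

namespace HasNonnegSpectrum

variable {f g : AddCircle (2 * π) → ℂ}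

theorem congr_ae (hf : HasNonnegSpectrum f) (hfg : f =ᵐ[haarAddCircle] g) :
    HasNonnegSpectrum g := fun n hn => by
  rw [← fourierCoeff_congr_ae hfg]; exact hf n hn

theorem add (hf : HasNonnegSpectrum f) (hg : HasNonnegSpectrum g)
    (hfi : Integrable f haarAddCircle) (hgi : Integrable g haarAddCircle) :
    HasNonnegSpectrum (fun x => f x + g x) := fun n hn => by
  rw [← Pi.add_def, fourierCoeff.add hfi hgi, Pi.add_apply, hf n hn, hg n hn, add_zero]

theorem circlePt_pow_mul (hf : HasNonnegSpectrum f) (k : ℕ) :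
    HasNonnegSpectrum (fun x => circlePt x ^ k * f x) := fun n hn => by
  rw [fourierCoeff_circlePt_pow_mul]; exact hf _ (by omega)

theorem const_mul (hf : HasNonnegSpectrum f) (c : ℂ) :
    HasNonnegSpectrum (fun x => c * f x) := fun n hn => by
  rw [fourierCoeff.const_mul, hf n hn, mul_zero]

theorem polynomial_mul (hf : HasNonnegSpectrum f) (hfi : Integrable f haarAddCircle)
    (P : ℂ[X]) : HasNonnegSpectrum (fun x => P.eval (circlePt x) * f x) := by
  induction P using Polynomial.induction_on' with
  | add P Q hP hQ =>
    simp only [eval_add, add_mul]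
    exact hP.add hQ (hfi.continuous_mul (P.continuous.comp continuous_circlePt))
      (hfi.continuous_mul (Q.continuous.comp continuous_circlePt))
  | monomial k c =>
    simpa only [eval_monomial, mul_assoc] using (hf.circlePt_pow_mul k).const_mul c

/-- Bézout: `R = (R a) P + (R c) Q` where `a P + c Q = 1`. -/
theorem polynomial_mul_of_isCoprime {K : AddCircle (2 * π) → ℂ}
    (hK : Integrable K haarAddCircle)
    {P Q : ℂ[X]} (hPQ : IsCoprime P Q)
    (hP : HasNonnegSpectrum fun x => P.eval (circlePt x) * K x)
    (hQ : HasNonnegSpectrum fun x => Q.eval (circlePt x) * K x) (R : ℂ[X]) :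
    HasNonnegSpectrum fun x => R.eval (circlePt x) * K x := by
  obtain ⟨a, c, hac⟩ := hPQ
  have hcont (S : ℂ[X]) : Continuous fun x => S.eval (circlePt x) :=
    S.continuous.comp continuous_circlePt
  have hPK := hK.continuous_mul (hcont P)
  have hQK := hK.continuous_mul (hcont Q)
  convert (hP.polynomial_mul hPK (R * a)).add (hQ.polynomial_mul hQK (R * c))
    (hPK.continuous_mul (hcont _)) (hQK.continuous_mul (hcont _)) using 2 with x
  have hac_x := congrArg (eval (circlePt x)) hac
  simp only [eval_add, eval_mul, eval_one] at hac_x ⊢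
  linear_combination (-(R.eval (circlePt x) * K x)) * hac_x

end HasNonnegSpectrum

theorem forall_fourierCoeff_conj_circlePt_mul_eq_zero_iff (F : AddCircle (2 * π) → ℂ) :
    (∀ n : ℤ, 0 ≤ n → fourierCoeff (fun x => conj (circlePt x * F x)) n = 0) ↔
      HasNonnegSpectrum F := by
  have hshift (n : ℤ) : fourierCoeff (fun x => circlePt x * F x) n = fourierCoeff F (n - 1) := by
    simpa using fourierCoeff_circlePt_pow_mul F 1 n
  simp only [fourierCoeff_conj, map_eq_zero, hshift]
  refine ⟨fun h n hn => ?_, fun h n hn => h _ (by omega)⟩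
  simpa using h (-n - 1) (by omega)

theorem one_sub_mul_ne_zero_of_norm_lt {a b : ℂ} (ha : ‖a‖ < 1) (hb : ‖b‖ ≤ 1) :
    1 - a * b ≠ 0 := by
  refine sub_ne_zero.mpr fun h => ?_
  have hab : ‖a * b‖ < 1 := by
    rw [norm_mul]; exact mul_lt_one_of_nonneg_of_lt_one_left (norm_nonneg a) ha hb
  rw [← h, norm_one] at hab
  exact hab.false

theorem sub_conj_eq_mul_conj_one_sub_mul {z : ℂ} (hz : ‖z‖ = 1) (w : ℂ) :
    z - conj w = z * conj (1 - w * z) := by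
  have hzz : z * conj z = 1 := by rw [mul_comm, Complex.conj_mul', hz]; norm_num
  simp only [map_sub, map_one, map_mul]
  linear_combination conj w * hzz

/-- `conjReflect n P` is the polynomial `z ↦ zⁿ · conj (P (1 / conj z))`. -/
def conjReflect (n : ℕ) (P : ℂ[X]) : ℂ[X] := (reflect n P).map (starRingEnd ℂ)

section conjReflect

variable {n : ℕ} {P : ℂ[X]}

theorem eval_conjReflect_mul_pow (hP : P.natDegree ≤ n) {z : ℂ} (hz : z ≠ 0) :
    (conjReflect n P).eval z * z⁻¹ ^ n = conj (P.eval (conj z)⁻¹) := by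
  let _ : Invertible z⁻¹ := invertibleOfNonzero (inv_ne_zero hz)
  have key := eval₂_reflect_mul_pow (starRingEnd ℂ) z⁻¹ n P hP
  rw [invOf_eq_inv, inv_inv] at key
  rw [conjReflect, eval_map, key, ← map_inv₀, ← eval₂_hom, Complex.conj_conj]

theorem eval_conjReflect_of_norm_eq_one (hP : P.natDegree ≤ n) {z : ℂ} (hz : ‖z‖ = 1) :
    (conjReflect n P).eval z = z ^ n * conj (P.eval z) := by
  have hz0 : z ≠ 0 := norm_ne_zero_iff.mp (by rw [hz]; exact one_ne_zero)
  have key := eval_conjReflect_mul_pow hP hz0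
  rw [← Complex.inv_eq_conj hz, inv_inv] at key
  rw [← key, inv_pow]
  field_simp

theorem eval_conjReflect_zero : (conjReflect n P).eval 0 = conj (P.coeff n) := by
  rw [conjReflect, ← coeff_zero_eq_eval_zero, coeff_map, coeff_reflect, revAt_le (Nat.zero_le n),
    Nat.sub_zero]

end conjReflect

section Blaschke

variable {N : ℕ} (p : Fin N → ℂ)

/-- The denominator `B` of the symbol `u = A / B`. -/
def blaschkeDen : ℂ[X] := ∏ j, (1 - C (p j) * X)

def blaschkeNum : ℂ[X] := ∏ j, (X - C (conj (p j)))

theorem blaschke_eq_div (x : AddCircle (2 * π)) :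
    blaschke p x = (blaschkeNum p).eval (circlePt x) / (blaschkeDen p).eval (circlePt x) := by
  simp only [blaschke, blaschkeNum, blaschkeDen, eval_prod, eval_sub, eval_X, eval_C, eval_one,
    eval_mul, Finset.prod_div_distrib]

theorem eval_blaschkeNum_circlePt (x : AddCircle (2 * π)) :
    (blaschkeNum p).eval (circlePt x) =
      circlePt x ^ N * conj ((blaschkeDen p).eval (circlePt x)) := by
  simp only [blaschkeNum, blaschkeDen, eval_prod, eval_sub, eval_X, eval_C, eval_one, eval_mul,
    map_prod, sub_conj_eq_mul_conj_one_sub_mul (norm_circlePt x), Finset.prod_mul_distrib,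
    Finset.prod_const, Finset.card_univ, Fintype.card_fin]

theorem eval_blaschkeNum_eq_zero_iff {a : ℂ} :
    (blaschkeNum p).eval a = 0 ↔ ∃ j, a = conj (p j) := by
  simp [blaschkeNum, eval_prod, Finset.prod_eq_zero_iff, sub_eq_zero]

theorem natDegree_blaschkeDen_lt {j : Fin N} (hj : p j = 0) : (blaschkeDen p).natDegree < N := by
  rw [blaschkeDen, ← Finset.mul_prod_erase _ _ (Finset.mem_univ j), hj, map_zero, zero_mul,
    sub_zero, one_mul]
  calc (∏ i ∈ Finset.univ.erase j, (1 - C (p i) * X)).natDegree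
      ≤ ∑ i ∈ Finset.univ.erase j, (1 - C (p i) * X).natDegree := natDegree_prod_le _ _
    _ ≤ ∑ i ∈ Finset.univ.erase j, 1 := by gcongr; compute_degree!
    _ < N := by simpa [Finset.card_erase_of_mem] using j.pos

variable {p}

theorem eval_blaschkeDen_ne_zero (hp : ∀ j, ‖p j‖ < 1) {z : ℂ} (hz : ‖z‖ ≤ 1) :
    (blaschkeDen p).eval z ≠ 0 := by
  simp only [blaschkeDen, eval_prod, eval_sub, eval_one, eval_mul, eval_C, eval_X]
  exact Finset.prod_ne_zero_iff.mpr fun j _ => one_sub_mul_ne_zero_of_norm_lt (hp j) hz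

theorem eval_blaschkeNum_circlePt_ne_zero (hp : ∀ j, ‖p j‖ < 1) (x : AddCircle (2 * π)) :
    (blaschkeNum p).eval (circlePt x) ≠ 0 := by
  rw [eval_blaschkeNum_circlePt]
  exact mul_ne_zero (pow_ne_zero _ (circlePt_ne_zero x))
    ((_root_.map_ne_zero _).mpr (eval_blaschkeDen_ne_zero hp (norm_circlePt x).le))

theorem norm_blaschke (hp : ∀ j, ‖p j‖ < 1) (x : AddCircle (2 * π)) : ‖blaschke p x‖ = 1 := by
  rw [blaschke_eq_div, eval_blaschkeNum_circlePt, norm_div, norm_mul, norm_pow, norm_circlePt,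
    one_pow, one_mul, Complex.norm_conj,
    div_self (norm_ne_zero_iff.mpr (eval_blaschkeDen_ne_zero hp (norm_circlePt x).le))]

theorem conj_blaschke (hp : ∀ j, ‖p j‖ < 1) (x : AddCircle (2 * π)) :
    conj (blaschke p x) =
      (blaschkeDen p).eval (circlePt x) / (blaschkeNum p).eval (circlePt x) := by
  rw [← Complex.inv_eq_conj (norm_blaschke hp x), blaschke_eq_div, inv_div]

theorem isCoprime_blaschkeNum_of_eval_ne_zero {P : ℂ[X]} (hP : ∀ j, P.eval (conj (p j)) ≠ 0) :
    IsCoprime P (blaschkeNum p) := by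
  rw [isCoprime_iff_aeval_ne_zero_of_isAlgClosed ℂ ℂ]
  refine fun a => or_iff_not_imp_right.mpr fun ha => ?_
  obtain ⟨j, rfl⟩ := (eval_blaschkeNum_eq_zero_iff p).mp (by simpa using ha)
  simpa using hP j

theorem isCoprime_blaschkeDen_blaschkeNum (hp : ∀ j, ‖p j‖ < 1) :
    IsCoprime (blaschkeDen p) (blaschkeNum p) :=
  isCoprime_blaschkeNum_of_eval_ne_zero fun j =>
    eval_blaschkeDen_ne_zero hp (by rw [Complex.norm_conj]; exact (hp j).le)

theorem isCoprime_conjReflect_blaschkeNum {A : ℂ[X]} (hA : A ≠ 0)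
    (hAdeg : A.natDegree ≤ N - 1) (hcop : IsCoprime A (blaschkeDen p))
    (hdeg : A.natDegree = N - 1 ∨ (blaschkeDen p).natDegree = N) :
    IsCoprime (conjReflect (N - 1) A) (blaschkeNum p) := by
  refine isCoprime_blaschkeNum_of_eval_ne_zero fun j => ?_
  by_cases hpj : p j = 0
  · have hAN : A.natDegree = N - 1 := hdeg.resolve_right (natDegree_blaschkeDen_lt p hpj).ne
    rw [hpj, map_zero, eval_conjReflect_zero, ← hAN, _root_.map_ne_zero]
    exact leadingCoeff_ne_zero.mpr hA
  · intro hzero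
    have hA_root : A.eval (p j)⁻¹ = 0 := by
      have := eval_conjReflect_mul_pow hAdeg ((_root_.map_ne_zero (starRingEnd ℂ)).mpr hpj)
      rwa [hzero, zero_mul, Complex.conj_conj, eq_comm, map_eq_zero] at this
    have hB_root : (blaschkeDen p).eval (p j)⁻¹ = 0 := by
      simp only [blaschkeDen, eval_prod, eval_sub, eval_one, eval_mul, eval_C, eval_X]
      exact Finset.prod_eq_zero (Finset.mem_univ j) (by rw [mul_inv_cancel₀ hpj, sub_self])
    simpa [hA_root, hB_root] using aeval_ne_zero_of_isCoprime hcop (p j)⁻¹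

theorem conj_eval_div_blaschkeDen (hN : 0 < N) {A : ℂ[X]} (hAdeg : A.natDegree ≤ N - 1)
    (x : AddCircle (2 * π)) :
    conj (A.eval (circlePt x) / (blaschkeDen p).eval (circlePt x)) =
      circlePt x *
        ((conjReflect (N - 1) A).eval (circlePt x) / (blaschkeNum p).eval (circlePt x)) := by
  rw [eval_conjReflect_of_norm_eq_one hAdeg (norm_circlePt x), eval_blaschkeNum_circlePt,
    map_div₀, ← mul_div_assoc, ← mul_assoc, ← pow_succ', Nat.sub_add_cancel hN,
    mul_div_mul_left _ _ (pow_ne_zero _ (circlePt_ne_zero x))]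

variable (p) in
def divBlaschkeNum (h : AddCircle (2 * π) → ℂ) (x : AddCircle (2 * π)) : ℂ :=
  h x / (blaschkeNum p).eval (circlePt x)

variable {h : AddCircle (2 * π) → ℂ}

theorem integrable_divBlaschkeNum (hp : ∀ j, ‖p j‖ < 1) (hh : Integrable h haarAddCircle) :
    Integrable (divBlaschkeNum p h) haarAddCircle := by
  unfold divBlaschkeNum
  simp_rw [div_eq_inv_mul]
  exact hh.continuous_mul (((blaschkeNum p).continuous.comp continuous_circlePt).inv₀
    (eval_blaschkeNum_circlePt_ne_zero hp))

theorem eval_blaschkeNum_mul_divBlaschkeNum (hp : ∀ j, ‖p j‖ < 1) (x : AddCircle (2 * π)) :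
    (blaschkeNum p).eval (circlePt x) * divBlaschkeNum p h x = h x :=
  mul_div_cancel₀ _ (eval_blaschkeNum_circlePt_ne_zero hp x)

theorem conj_blaschke_mul (hp : ∀ j, ‖p j‖ < 1) (x : AddCircle (2 * π)) :
    conj (blaschke p x) * h x = (blaschkeDen p).eval (circlePt x) * divBlaschkeNum p h x := by
  rw [conj_blaschke hp, divBlaschkeNum, div_mul_eq_mul_div, mul_div_assoc]

theorem blaschke_mul_conj (hp : ∀ j, ‖p j‖ < 1) (x : AddCircle (2 * π)) :
    blaschke p x * conj (blaschke p x) = 1 := by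
  rw [Complex.mul_conj', norm_blaschke hp]
  norm_num

theorem forall_fourierCoeff_div_mul_conj_eq_zero_iff (hN : 0 < N) {A : ℂ[X]}
    (hAdeg : A.natDegree ≤ N - 1) :
    (∀ n : ℤ, 0 ≤ n → fourierCoeff
        (fun x => A.eval (circlePt x) / (blaschkeDen p).eval (circlePt x) * conj (h x)) n = 0) ↔
      HasNonnegSpectrum fun x =>
        (conjReflect (N - 1) A).eval (circlePt x) * divBlaschkeNum p h x := by
  rw [← forall_fourierCoeff_conj_circlePt_mul_eq_zero_iff]
  have hconj : (fun x => A.eval (circlePt x) / (blaschkeDen p).eval (circlePt x) * conj (h x)) =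
      fun x => conj (circlePt x *
        ((conjReflect (N - 1) A).eval (circlePt x) * divBlaschkeNum p h x)) := by
    funext x
    rw [← Complex.conj_conj (_ / _), conj_eval_div_blaschkeDen hN hAdeg, ← map_mul, divBlaschkeNum]
    congr 1
    ring
  rw [hconj]

theorem memLp_conj_blaschke_mul (hp : ∀ j, ‖p j‖ < 1) (hh : MemLp h 2 haarAddCircle) :
    MemLp (fun x => conj (blaschke p x) * h x) 2 haarAddCircle := by
  have hb : Measurable (blaschke p) := by
    have := continuous_circlePt.measurable
    unfold blaschke; fun_prop
  refine hh.of_le ((hb.aestronglyMeasurable.star).mul hh.aestronglyMeasurable)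
    (Filter.Eventually.of_forall fun x => ?_)
  simp [norm_blaschke hp]

end Blaschke

/-- Let `u = A/B ∈ M(N)` with `B(z) = ∏_{j=1}^N (1 − p_j z)`,
`|p_j| < 1`, and let `b` be the associated Blaschke product. Then `ker H_u = b·L²_+`:
for `h ∈ L²_+`, `Π(u·conj h) = 0` iff `h = b·g` for some `g ∈ L²_+`. -/
theorem stmt18 (N : ℕ) (hN : 0 < N) (p : Fin N → ℂ) (hp : ∀ j, ‖p j‖ < 1)
    (A : Polynomial ℂ) (hA : A ≠ 0) (hAdeg : A.natDegree ≤ N - 1)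
    (hcop : IsCoprime A (∏ j, (1 - Polynomial.C (p j) * Polynomial.X)))
    (hdeg : A.natDegree = N - 1 ∨
      (∏ j, (1 - Polynomial.C (p j) * Polynomial.X)).natDegree = N)
    (u : AddCircle (2 * π) → ℂ)
    (hu : ∀ x, u x = A.eval (circlePt x) /
      (∏ j, (1 - Polynomial.C (p j) * Polynomial.X)).eval (circlePt x))
    (h : AddCircle (2 * π) → ℂ) (hh : MemLp h 2 haarAddCircle)
    (hhardy : ∀ n : ℤ, n < 0 → fourierCoeff h n = 0) :
    (∀ n : ℤ, 0 ≤ n → fourierCoeff (fun x => u x * conj (h x)) n = 0) ↔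
      ∃ g : AddCircle (2 * π) → ℂ, MemLp g 2 haarAddCircle ∧
        (∀ n : ℤ, n < 0 → fourierCoeff g n = 0) ∧
        h =ᵐ[haarAddCircle] fun x => blaschke p x * g x := by
  simp only [hu]
  refine (forall_fourierCoeff_div_mul_conj_eq_zero_iff (p := p) hN hAdeg).trans ?_
  have hK := integrable_divBlaschkeNum hp (hh.integrable one_le_two)
  have hDK :
      HasNonnegSpectrum fun x => (blaschkeNum p).eval (circlePt x) * divBlaschkeNum p h x := by
    simp only [eval_blaschkeNum_mul_divBlaschkeNum hp]
    exact hhardy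
  constructor
  · intro hAK
    have hBK := HasNonnegSpectrum.polynomial_mul_of_isCoprime hK
      (isCoprime_conjReflect_blaschkeNum hA hAdeg hcop hdeg) hAK hDK (blaschkeDen p)
    simp only [← conj_blaschke_mul hp] at hBK
    exact ⟨_, memLp_conj_blaschke_mul hp hh, hBK, Filter.Eventually.of_forall fun x => by
      simp only [← mul_assoc, blaschke_mul_conj hp, one_mul]⟩
  · rintro ⟨g, -, hg, hhg⟩
    refine HasNonnegSpectrum.polynomial_mul_of_isCoprime hK (isCoprime_blaschkeDen_blaschkeNum hp)
      (HasNonnegSpectrum.congr_ae hg (hhg.mono fun x hx => ?_)) hDK _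
    simp only [← conj_blaschke_mul hp, hx]
    rw [← mul_assoc, mul_comm (conj _), blaschke_mul_conj hp, one_mul]
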